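/- arXiv:2108.08612 — 8 statements merged into one kernel-verified Lean document; each statement's English description precedes it below -/
import Mathlib

section
/- The variance of the joint advantage under the product policy decomposes additively: Var_{a ~ π_1 ⊗ ⋯ ⊗ π_n}[A(a)] = Σ_{i=1}^n E_{a^1 ~ π_1, ..., a^{i-1} ~ π_{i-1}}[ Var_{a^i ~ π_i}[ A^i(a^{1..i-1}, a^i) ] ], where A(a) = Q(a) - E_{a' ~ π}[Q(a')] is the joint advantage and A^i(a^{1..i-1}, a^i) = Q^{1..i}(a^{1..i}) - Q^{1..i-1}(a^{1..i-1}) is the i-th multi-agent advantage. -/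
open Finset

set_option linter.unusedSectionVars false

/-- Partial expected value `Q^{1..k}`: expectation of `Q` over coordinates `≥ k`
(drawn independently from the policies `π`), with coordinates `< k` fixed by `a`. -/
def Qpart {n : ℕ} {A : Fin n → Type*} [∀ i, Fintype (A i)]
    (π : ∀ i, A i → ℝ) (Q : (∀ i, A i) → ℝ) (k : ℕ) (a : ∀ i, A i) : ℝ :=
  ∑ b : ∀ i, A i, (∏ i, π i (b i)) *
    Q (fun i => if (i : ℕ) < k then a i else b i)

/-- The i-th multi-agent advantage `A^i(a^{1..i-1}, a^i)`. -/
def maAdv {n : ℕ} {A : Fin n → Type*} [∀ i, Fintype (A i)]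
    (π : ∀ i, A i → ℝ) (Q : (∀ i, A i) → ℝ) (i : Fin n) (a : ∀ i, A i) : ℝ :=
  Qpart π Q ((i : ℕ) + 1) a - Qpart π Q (i : ℕ) a

section Aux
variable {n : ℕ} {A : Fin n → Type*} [∀ i, Fintype (A i)]
  (π : ∀ i, A i → ℝ) (Q : (∀ i, A i) → ℝ)

lemma prod_update_pi (i : Fin n) (b : ∀ j, A j) (x : A i) :
    (∏ j, π j (Function.update b i x j)) = π i x * ∏ j ∈ univ.erase i, π j (b j) := by
  rw [← Finset.mul_prod_erase univ (fun j => π j (Function.update b i x j)) (mem_univ i),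
    Function.update_self]
  congr 1
  exact Finset.prod_congr rfl fun j hj => by
    rw [Function.update_of_ne (Finset.ne_of_mem_erase hj)]

lemma sum_mu (hπ1 : ∀ i, ∑ x, π i x = 1) : ∑ b : ∀ i, A i, ∏ i, π i (b i) = 1 := by
  rw [← Fintype.piFinset_univ, ← Finset.prod_univ_sum]
  simp [hπ1]

lemma sum_mu_replace (hπ1 : ∀ i, ∑ x, π i x = 1) (j : Fin n) (h : (∀ i, A i) → ℝ) :
    ∑ a : ∀ i, A i, (∏ i, π i (a i)) * h a
    = ∑ a : ∀ i, A i, (∏ i, π i (a i)) * ∑ x, π j x * h (Function.update a j x) := by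
  have einv : Function.Involutive (fun p : (∀ i, A i) × A j =>
      (Function.update p.1 j p.2, p.1 j)) := by
    intro p
    simp [Function.update_idem, Function.update_eq_self]
  symm
  calc ∑ a : ∀ i, A i, (∏ i, π i (a i)) * ∑ x, π j x * h (Function.update a j x)
      = ∑ p : (∀ i, A i) × A j,
          (∏ i, π i (p.1 i)) * (π j p.2 * h (Function.update p.1 j p.2)) := by
        rw [Fintype.sum_prod_type]
        simp [Finset.mul_sum]
    _ = ∑ p : (∀ i, A i) × A j,
          (∏ i, π i ((Function.update p.1 j p.2) i)) *
            (π j (p.1 j) * h (Function.update (Function.update p.1 j p.2) j (p.1 j))) :=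
        (Fintype.sum_bijective _ einv.bijective _ _ fun p => rfl).symm
    _ = ∑ p : (∀ i, A i) × A j,
          (π j p.2 * ∏ i ∈ univ.erase j, π i (p.1 i)) * (π j (p.1 j) * h p.1) := by
        apply Finset.sum_congr rfl
        intro p _
        rw [prod_update_pi, Function.update_idem, Function.update_eq_self]
    _ = ∑ a : ∀ i, A i, (∏ i, π i (a i)) * h a := by
        rw [Fintype.sum_prod_type]
        apply Finset.sum_congr rfl
        intro a _
        calc ∑ x : A j, (π j x * ∏ i ∈ univ.erase j, π i (a i)) * (π j (a j) * h a)
            = (∑ x : A j, π j x) * ((π j (a j) * ∏ i ∈ univ.erase j, π i (a i)) * h a) := by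
              rw [Finset.sum_mul]
              exact Finset.sum_congr rfl fun x _ => by ring
          _ = (∏ i, π i (a i)) * h a := by
              rw [hπ1, one_mul, Finset.mul_prod_erase univ (fun i => π i (a i)) (mem_univ j)]

lemma qpart_update_high (k : ℕ) (m : Fin n) (hk : k ≤ (m : ℕ)) (a : ∀ i, A i) (x : A m) :
    Qpart π Q k (Function.update a m x) = Qpart π Q k a := by
  unfold Qpart
  apply Finset.sum_congr rfl
  intro b _
  congr 1
  apply congrArg
  funext j
  by_cases hj : (j : ℕ) < k
  · have hjm : j ≠ m := by rintro rfl; omega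
    simp [hj, Function.update_of_ne hjm]
  · simp [hj]

lemma qpart_zero (a : ∀ i, A i) :
    Qpart π Q 0 a = ∑ b : ∀ i, A i, (∏ i, π i (b i)) * Q b := by
  simp [Qpart]

lemma qpart_top (hπ1 : ∀ i, ∑ x, π i x = 1) (a : ∀ i, A i) : Qpart π Q n a = Q a := by
  unfold Qpart
  have h : ∀ b : ∀ i, A i, (fun i : Fin n => if (i : ℕ) < n then a i else b i) = a := by
    intro b; funext j; simp [j.isLt]
  calc ∑ b : ∀ i, A i, (∏ i, π i (b i)) * Q (fun i => if (i : ℕ) < n then a i else b i)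
      = ∑ b : ∀ i, A i, (∏ i, π i (b i)) * Q a :=
        Finset.sum_congr rfl fun b _ => by rw [h b]
    _ = Q a := by rw [← Finset.sum_mul, sum_mu π hπ1, one_mul]

lemma qpart_avg (hπ1 : ∀ i, ∑ x, π i x = 1) (i : Fin n) (a : ∀ j, A j) :
    ∑ x : A i, π i x * Qpart π Q ((i : ℕ) + 1) (Function.update a i x)
    = Qpart π Q (i : ℕ) a := by
  have einv : Function.Involutive (fun p : A i × (∀ j, A j) =>
      (p.2 i, Function.update p.2 i p.1)) := by
    intro p
    simp [Function.update_idem, Function.update_eq_self]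
  have key : ∀ (x : A i) (b : ∀ j, A j),
      (fun j : Fin n => if (j : ℕ) < (i : ℕ) + 1 then Function.update a i (b i) j
        else Function.update b i x j)
      = (fun j : Fin n => if (j : ℕ) < (i : ℕ) then a j else b j) := by
    intro x b; funext j
    rcases lt_trichotomy (j : ℕ) (i : ℕ) with h | h | h
    · have hj : j ≠ i := by rintro rfl; omega
      simp [h, Nat.lt_succ_of_lt h, Function.update_of_ne hj]
    · have hj : j = i := Fin.ext h
      subst hj
      simp
    · have hj : j ≠ i := by rintro rfl; omega
      have h1 : ¬ ((j : ℕ) < (i : ℕ) + 1) := by omega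
      have h2 : ¬ ((j : ℕ) < (i : ℕ)) := by omega
      simp [h1, h2, Function.update_of_ne hj]
  calc ∑ x : A i, π i x * Qpart π Q ((i : ℕ) + 1) (Function.update a i x)
      = ∑ p : A i × (∀ j, A j), π i p.1 * ((∏ j, π j (p.2 j)) *
          Q (fun j => if (j : ℕ) < (i : ℕ) + 1 then Function.update a i p.1 j else p.2 j)) := by
        rw [Fintype.sum_prod_type]
        unfold Qpart
        simp [Finset.mul_sum, mul_assoc]
    _ = ∑ p : A i × (∀ j, A j), π i (p.2 i) * ((∏ j, π j ((Function.update p.2 i p.1) j)) *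
          Q (fun j => if (j : ℕ) < (i : ℕ) + 1 then Function.update a i (p.2 i) j
            else Function.update p.2 i p.1 j)) :=
        (Fintype.sum_bijective _ einv.bijective _ _ fun p => rfl).symm
    _ = ∑ p : A i × (∀ j, A j), π i (p.2 i) * ((π i p.1 * ∏ j ∈ univ.erase i, π j (p.2 j)) *
          Q (fun j => if (j : ℕ) < (i : ℕ) then a j else p.2 j)) := by
        apply Finset.sum_congr rfl
        intro p _
        rw [prod_update_pi, key]
    _ = Qpart π Q (i : ℕ) a := by
        rw [Fintype.sum_prod_type, Finset.sum_comm]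
        unfold Qpart
        apply Finset.sum_congr rfl
        intro b _
        calc ∑ x : A i, π i (b i) * ((π i x * ∏ j ∈ univ.erase i, π j (b j)) *
              Q (fun j => if (j : ℕ) < (i : ℕ) then a j else b j))
            = (∑ x : A i, π i x) * ((π i (b i) * ∏ j ∈ univ.erase i, π j (b j)) *
              Q (fun j => if (j : ℕ) < (i : ℕ) then a j else b j)) := by
              rw [Finset.sum_mul]
              exact Finset.sum_congr rfl fun x _ => by ring
          _ = (∏ j, π j (b j)) * Q (fun j => if (j : ℕ) < (i : ℕ) then a j else b j) := by
              rw [hπ1, one_mul, Finset.mul_prod_erase univ (fun j => π j (b j)) (mem_univ i)]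

lemma maAdv_avg (hπ1 : ∀ i, ∑ x, π i x = 1) (i : Fin n) (a : ∀ j, A j) :
    ∑ x : A i, π i x * maAdv π Q i (Function.update a i x) = 0 := by
  unfold maAdv
  simp only [mul_sub]
  rw [Finset.sum_sub_distrib, qpart_avg π Q hπ1 i a]
  have h : ∀ x : A i, Qpart π Q (i : ℕ) (Function.update a i x) = Qpart π Q (i : ℕ) a :=
    fun x => qpart_update_high π Q i i le_rfl a x
  simp only [h]
  rw [← Finset.sum_mul, hπ1, one_mul, sub_self]

lemma maAdv_update_high {i j : Fin n} (hij : i < j) (a : ∀ k, A k) (x : A j) :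
    maAdv π Q i (Function.update a j x) = maAdv π Q i a := by
  unfold maAdv
  rw [qpart_update_high π Q ((i : ℕ) + 1) j (by omega) a x,
    qpart_update_high π Q (i : ℕ) j (by omega) a x]

lemma maAdv_telescope (hπ1 : ∀ i, ∑ x, π i x = 1) (a : ∀ i, A i) :
    ∑ i : Fin n, maAdv π Q i a = Q a - ∑ b : ∀ i, A i, (∏ i, π i (b i)) * Q b := by
  unfold maAdv
  rw [Fin.sum_univ_eq_sum_range (fun k => Qpart π Q (k + 1) a - Qpart π Q k a) n,
    Finset.sum_range_sub (fun k => Qpart π Q k a), qpart_top π Q hπ1, qpart_zero]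

lemma cross_zero (hπ1 : ∀ i, ∑ x, π i x = 1) {i j : Fin n} (hij : i < j) :
    ∑ a : ∀ i, A i, (∏ k, π k (a k)) * (maAdv π Q i a * maAdv π Q j a) = 0 := by
  rw [sum_mu_replace π hπ1 j (fun a => maAdv π Q i a * maAdv π Q j a)]
  have h : ∀ a : ∀ i, A i, (∑ x : A j, π j x *
      (maAdv π Q i (Function.update a j x) * maAdv π Q j (Function.update a j x))) = 0 := by
    intro a
    calc ∑ x : A j, π j x *
          (maAdv π Q i (Function.update a j x) * maAdv π Q j (Function.update a j x))
        = maAdv π Q i a * ∑ x : A j, π j x * maAdv π Q j (Function.update a j x) := by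
          rw [Finset.mul_sum]
          exact Finset.sum_congr rfl fun x _ => by
            rw [maAdv_update_high π Q hij a x]; ring
      _ = 0 := by rw [maAdv_avg π Q hπ1 j a, mul_zero]
  simp only [h, mul_zero, Finset.sum_const_zero]

end Aux

/-- The variance of the joint advantage under the product policy decomposes as the sum
over agents of the expectation (over earlier agents' actions) of the conditional variance
of the i-th multi-agent advantage over agent `i`'s action. -/
theorem advantage_variance_decomposition
    {n : ℕ} {A : Fin n → Type*} [∀ i, Fintype (A i)] [∀ i, Nonempty (A i)]
    (π : ∀ i, A i → ℝ) (hπ0 : ∀ i x, 0 ≤ π i x) (hπ1 : ∀ i, ∑ x, π i x = 1)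
    (Q : (∀ i, A i) → ℝ) :
    (∑ a : ∀ i, A i, (∏ i, π i (a i)) *
        (Q a - ∑ b : ∀ i, A i, (∏ i, π i (b i)) * Q b) ^ 2)
      - (∑ a : ∀ i, A i, (∏ i, π i (a i)) *
        (Q a - ∑ b : ∀ i, A i, (∏ i, π i (b i)) * Q b)) ^ 2
    = ∑ i : Fin n, ∑ a : ∀ i, A i, (∏ j, π j (a j)) *
        ((∑ x : A i, π i x * (maAdv π Q i (Function.update a i x)) ^ 2)
          - (∑ x : A i, π i x * maAdv π Q i (Function.update a i x)) ^ 2) := by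
  have hmean : ∑ a : ∀ i, A i, (∏ i, π i (a i)) *
      (Q a - ∑ b : ∀ i, A i, (∏ i, π i (b i)) * Q b) = 0 := by
    simp only [mul_sub]
    rw [Finset.sum_sub_distrib, ← Finset.sum_mul, sum_mu π hπ1, one_mul, sub_self]
  rw [hmean]
  have hdiff : ∀ a : ∀ i, A i,
      Q a - ∑ b : ∀ i, A i, (∏ i, π i (b i)) * Q b = ∑ i : Fin n, maAdv π Q i a :=
    fun a => (maAdv_telescope π Q hπ1 a).symm
  simp only [hdiff]
  rw [show ((0 : ℝ) ^ 2 = 0) by ring, sub_zero]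
  have hL : ∑ a : ∀ i, A i, (∏ i, π i (a i)) * (∑ i : Fin n, maAdv π Q i a) ^ 2
      = ∑ i : Fin n, ∑ a : ∀ i, A i, (∏ j, π j (a j)) * (maAdv π Q i a) ^ 2 := by
    have expand : ∀ a : ∀ i, A i, (∏ i, π i (a i)) * (∑ i : Fin n, maAdv π Q i a) ^ 2
        = ∑ i : Fin n, ∑ j : Fin n, (∏ k, π k (a k)) * (maAdv π Q i a * maAdv π Q j a) := by
      intro a
      rw [sq, Finset.sum_mul_sum, Finset.mul_sum]
      exact Finset.sum_congr rfl fun i _ => by rw [Finset.mul_sum]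
    simp only [expand]
    rw [Finset.sum_comm]
    apply Finset.sum_congr rfl
    intro i _
    rw [Finset.sum_comm, Finset.sum_eq_single i]
    · exact Finset.sum_congr rfl fun a _ => by rw [sq]
    · intro j _ hji
      rcases lt_or_gt_of_ne hji with hj | hj
      · calc ∑ a : ∀ i, A i, (∏ k, π k (a k)) * (maAdv π Q i a * maAdv π Q j a)
            = ∑ a : ∀ i, A i, (∏ k, π k (a k)) * (maAdv π Q j a * maAdv π Q i a) :=
              Finset.sum_congr rfl fun a _ => by ring
          _ = 0 := cross_zero π Q hπ1 hj
      · exact cross_zero π Q hπ1 hj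
    · intro h; exact absurd (mem_univ i) h
  rw [hL]
  apply Finset.sum_congr rfl
  intro i _
  have h0 : ∀ a : ∀ j, A j,
      (∑ x : A i, π i x * maAdv π Q i (Function.update a i x)) = 0 :=
    fun a => maAdv_avg π Q hπ1 i a
  simp only [h0]
  rw [show ((0 : ℝ) ^ 2 = 0) by ring]
  simp only [sub_zero]
  exact sum_mu_replace π hπ1 i (fun a => (maAdv π Q i a) ^ 2)
end

section
/- The variance of the joint advantage is bounded above by the sum of the variances of the local advantages: Var_{a ~ π}[A(a)] ≤ Σ_{i=1}^n Var_{a ~ π}[A^i(a^{-i}, a^i)], where A^i(a^{-i}, a^i) = Q(a^{-i}, a^i) − E_{a'^i ~ π_i}[Q(a^{-i}, a'^i)] is agent i's local advantage with all other agents' actions given. -/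
open Finset

/-- Variance of `f` under weights `w`: `E[f²] − (E[f])²`. -/
def varOf {α : Type*} [Fintype α] (w : α → ℝ) (f : α → ℝ) : ℝ :=
  (∑ a, w a * f a ^ 2) - (∑ a, w a * f a) ^ 2

namespace EfronSteinAux

variable {n : ℕ} {A : Fin n → Type*} [∀ i, Fintype (A i)] [∀ i, Nonempty (A i)]

/-- Product weight. -/
def W (π : ∀ i, A i → ℝ) (a : ∀ i, A i) : ℝ := ∏ i, π i (a i)

/-- Integrate out coordinate `i`. -/
def Ei (π : ∀ i, A i → ℝ) (i : Fin n) (f : (∀ i, A i) → ℝ) (a : ∀ i, A i) : ℝ :=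
  ∑ x : A i, π i x * f (Function.update a i x)

/-- Integrate out the coordinates in `s`. -/
def Es (π : ∀ i, A i → ℝ) (s : Finset (Fin n)) (f : (∀ i, A i) → ℝ) (a : ∀ i, A i) : ℝ :=
  ∑ b : ∀ i, A i, W π b * f (fun j => if j ∈ s then b j else a j)

/-- Weighted second moment. -/
def nrm2 (π : ∀ i, A i → ℝ) (f : (∀ i, A i) → ℝ) : ℝ := ∑ a, W π a * f a ^ 2

/-- Weighted inner product. -/
def ip (π : ∀ i, A i → ℝ) (f g : (∀ i, A i) → ℝ) : ℝ := ∑ a, W π a * (f a * g a)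

set_option linter.unusedSectionVars false

variable (π : ∀ i, A i → ℝ)

lemma W_nonneg (hπ0 : ∀ i x, 0 ≤ π i x) (a : ∀ i, A i) : 0 ≤ W π a :=
  Finset.prod_nonneg fun i _ => hπ0 i (a i)

lemma sum_W (hπ1 : ∀ i, ∑ x, π i x = 1) : ∑ a : ∀ i, A i, W π a = 1 := by
  rw [show (∑ a : ∀ i, A i, W π a) = ∏ i, ∑ x, π i x from (Fintype.prod_sum _).symm]
  simp [hπ1]

lemma weight_flip (i : Fin n) (b : ∀ j, A j) (x : A i) :
    π i (b i) * W π (Function.update b i x) = π i x * W π b := by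
  have h1 : W π (Function.update b i x) = π i x * ∏ j ∈ univ.erase i, π j (b j) := by
    rw [W, ← Finset.mul_prod_erase univ _ (mem_univ i), Function.update_self]
    congr 1
    exact Finset.prod_congr rfl fun j hj => by
      rw [Function.update_of_ne (Finset.ne_of_mem_erase hj)]
  have h2 : W π b = π i (b i) * ∏ j ∈ univ.erase i, π j (b j) :=
    (Finset.mul_prod_erase univ _ (mem_univ i)).symm
  rw [h1, h2]; ring

/-- The flip involution on `(∀ j, A j) × A i`. -/
def flipEquiv (i : Fin n) : ((∀ j, A j) × A i) ≃ ((∀ j, A j) × A i) where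
  toFun p := (Function.update p.1 i p.2, p.1 i)
  invFun p := (Function.update p.1 i p.2, p.1 i)
  left_inv p := by
    refine Prod.ext ?_ ?_
    · simp [Function.update_idem]
    · simp
  right_inv p := by
    refine Prod.ext ?_ ?_
    · simp [Function.update_idem]
    · simp

/-- Key symmetry lemma via the flip involution. -/
lemma key (i : Fin n) (G : (∀ j, A j) → (∀ j, A j) → ℝ) :
    ∑ b : ∀ j, A j, ∑ x : A i, π i x * (W π b * G b (Function.update b i x))
      = ∑ b : ∀ j, A j, ∑ x : A i, π i x * (W π b * G (Function.update b i x) b) := by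
  have h1 := Fintype.sum_prod_type
    (f := fun p : (∀ j, A j) × A i => π i p.2 * (W π p.1 * G p.1 (Function.update p.1 i p.2)))
  have h2 := Equiv.sum_comp (flipEquiv i)
    (fun p : (∀ j, A j) × A i => π i p.2 * (W π p.1 * G p.1 (Function.update p.1 i p.2)))
  rw [← h1, ← h2, Fintype.sum_prod_type]
  refine Finset.sum_congr rfl fun b _ => Finset.sum_congr rfl fun x _ => ?_
  simp only [flipEquiv, Equiv.coe_fn_mk]
  rw [Function.update_idem, Function.update_eq_self, ← mul_assoc, weight_flip, mul_assoc]

lemma key1 (hπ1 : ∀ i, ∑ x, π i x = 1) (i : Fin n) (g : (∀ j, A j) → ℝ) :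
    ∑ b : ∀ j, A j, ∑ x : A i, π i x * (W π b * g (Function.update b i x))
      = ∑ b : ∀ j, A j, W π b * g b := by
  rw [key π i (fun _ c => g c)]
  refine Finset.sum_congr rfl fun b _ => ?_
  rw [← Finset.sum_mul, hπ1, one_mul]

lemma Ei_sub (i : Fin n) (f g : (∀ j, A j) → ℝ) :
    Ei π i (fun a => f a - g a) = fun a => Ei π i f a - Ei π i g a := by
  funext a; simp [Ei, mul_sub, Finset.sum_sub_distrib]

lemma Ei_Ei (hπ1 : ∀ i, ∑ x, π i x = 1) (i : Fin n) (f : (∀ j, A j) → ℝ) :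
    Ei π i (Ei π i f) = Ei π i f := by
  funext a
  unfold Ei
  simp only [Function.update_idem]
  rw [← Finset.sum_mul, hπ1, one_mul]

lemma Ei_comm {i j : Fin n} (hij : i ≠ j) (f : (∀ j, A j) → ℝ) :
    Ei π i (Ei π j f) = Ei π j (Ei π i f) := by
  funext a
  unfold Ei
  simp_rw [Finset.mul_sum]
  rw [Finset.sum_comm]
  refine Finset.sum_congr rfl fun y _ => Finset.sum_congr rfl fun x _ => ?_
  rw [Function.update_comm hij]
  ring

lemma sum_W_Ei (hπ1 : ∀ i, ∑ x, π i x = 1) (i : Fin n) (f : (∀ j, A j) → ℝ) :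
    ∑ a : ∀ j, A j, W π a * Ei π i f a = ∑ a : ∀ j, A j, W π a * f a := by
  unfold Ei
  simp_rw [Finset.mul_sum]
  have h : ∀ (a : ∀ j, A j) (x : A i),
      W π a * (π i x * f (Function.update a i x))
        = π i x * (W π a * f (Function.update a i x)) := fun a x => by ring
  simp_rw [h]
  exact key1 π hπ1 i f

lemma ip_Ei (i : Fin n) (f g : (∀ j, A j) → ℝ) :
    ip π f (Ei π i g) = ip π (Ei π i f) g := by
  unfold ip Ei
  have l : ∀ a : ∀ j, A j,
      W π a * (f a * ∑ x : A i, π i x * g (Function.update a i x))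
        = ∑ x : A i, π i x * (W π a * (f a * g (Function.update a i x))) := by
    intro a; rw [Finset.mul_sum, Finset.mul_sum]
    exact Finset.sum_congr rfl fun x _ => by ring
  have r : ∀ a : ∀ j, A j,
      W π a * ((∑ x : A i, π i x * f (Function.update a i x)) * g a)
        = ∑ x : A i, π i x * (W π a * (f (Function.update a i x) * g a)) := by
    intro a; rw [Finset.sum_mul, Finset.mul_sum]
    exact Finset.sum_congr rfl fun x _ => by ring
  simp_rw [l, r]
  exact key π i (fun a c => f a * g c)

lemma Ei_sq_le (hπ0 : ∀ i x, 0 ≤ π i x) (hπ1 : ∀ i, ∑ x, π i x = 1) (i : Fin n)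
    (g : (∀ j, A j) → ℝ) (a : ∀ j, A j) :
    Ei π i g a ^ 2 ≤ Ei π i (fun b => g b ^ 2) a := by
  have h := Finset.sum_sq_le_sum_mul_sum_of_sq_eq_mul (univ : Finset (A i))
    (r := fun x => π i x * g (Function.update a i x)) (f := fun x => π i x)
    (g := fun x => π i x * g (Function.update a i x) ^ 2)
    (fun x _ => hπ0 i x) (fun x _ => mul_nonneg (hπ0 i x) (sq_nonneg _))
    (fun x _ => by ring)
  simpa [Ei, hπ1 i] using h

lemma nrm2_Ei_le (hπ0 : ∀ i x, 0 ≤ π i x) (hπ1 : ∀ i, ∑ x, π i x = 1) (i : Fin n)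
    (g : (∀ j, A j) → ℝ) : nrm2 π (Ei π i g) ≤ nrm2 π g := by
  unfold nrm2
  calc ∑ a, W π a * Ei π i g a ^ 2
      ≤ ∑ a, W π a * Ei π i (fun b => g b ^ 2) a :=
        Finset.sum_le_sum fun a _ =>
          mul_le_mul_of_nonneg_left (Ei_sq_le π hπ0 hπ1 i g a) (W_nonneg π hπ0 a)
    _ = ∑ a, W π a * g a ^ 2 := sum_W_Ei π hπ1 i _

lemma Es_empty (hπ1 : ∀ i, ∑ x, π i x = 1) (f : (∀ j, A j) → ℝ) : Es π ∅ f = f := by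
  funext a
  unfold Es
  simp only [Finset.notMem_empty, if_false]
  rw [← Finset.sum_mul, sum_W π hπ1, one_mul]

lemma Es_univ (f : (∀ j, A j) → ℝ) (a : ∀ j, A j) :
    Es π univ f a = ∑ b : ∀ j, A j, W π b * f b := by
  unfold Es; simp

lemma merge_update {s : Finset (Fin n)} {i : Fin n} (hi : i ∉ s) (a b : ∀ j, A j) (x : A i) :
    (fun j => if j ∈ s then b j else Function.update a i x j)
      = fun j => if j ∈ insert i s then Function.update b i x j else a j := by
  funext j
  by_cases hji : j = i
  · subst hji
    simp [hi, Finset.mem_insert]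
  · by_cases hjs : j ∈ s
    · simp [hjs, Finset.mem_insert, hji, Function.update_of_ne hji]
    · simp [hjs, Finset.mem_insert, hji, Function.update_of_ne hji]

lemma update_merge {s : Finset (Fin n)} {i : Fin n} (hi : i ∉ s) (a b : ∀ j, A j) (x : A i) :
    Function.update (fun j => if j ∈ s then b j else a j) i x
      = fun j => if j ∈ insert i s then Function.update b i x j else a j := by
  funext j
  by_cases hji : j = i
  · subst hji; simp [hi]
  · by_cases hjs : j ∈ s <;>
      simp [hjs, hji, Function.update_of_ne hji, Finset.mem_insert]

lemma Es_insert (hπ1 : ∀ i, ∑ x, π i x = 1) {s : Finset (Fin n)} {i : Fin n} (hi : i ∉ s)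
    (f : (∀ j, A j) → ℝ) : Ei π i (Es π s f) = Es π (insert i s) f := by
  funext a
  unfold Ei Es
  have l : ∀ x : A i,
      π i x * ∑ b : ∀ j, A j,
          W π b * f (fun j => if j ∈ s then b j else Function.update a i x j)
        = ∑ b : ∀ j, A j, π i x *
            (W π b * f (fun j => if j ∈ insert i s then Function.update b i x j else a j)) := by
    intro x
    rw [Finset.mul_sum]
    exact Finset.sum_congr rfl fun b _ => by rw [merge_update hi a b x]
  simp_rw [l]
  rw [Finset.sum_comm]
  exact key1 π hπ1 i (fun c => f (fun j => if j ∈ insert i s then c j else a j))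

lemma Es_Ei (hπ1 : ∀ i, ∑ x, π i x = 1) {s : Finset (Fin n)} {i : Fin n} (hi : i ∉ s)
    (f : (∀ j, A j) → ℝ) : Es π s (Ei π i f) = Es π (insert i s) f := by
  funext a
  unfold Es Ei
  have l : ∀ b : ∀ j, A j,
      W π b * ∑ x : A i,
          π i x * f (Function.update (fun j => if j ∈ s then b j else a j) i x)
        = ∑ x : A i, π i x *
            (W π b * f (fun j => if j ∈ insert i s then Function.update b i x j else a j)) := by
    intro b
    rw [Finset.mul_sum]
    exact Finset.sum_congr rfl fun x _ => by rw [update_merge hi a b x]; ring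
  simp_rw [l]
  exact key1 π hπ1 i (fun c => f (fun j => if j ∈ insert i s then c j else a j))

lemma nrm2_add (u v : (∀ j, A j) → ℝ) :
    nrm2 π (fun a => u a + v a) = nrm2 π u + 2 * ip π u v + nrm2 π v := by
  unfold nrm2 ip
  have h : ∀ a : ∀ j, A j, W π a * (u a + v a) ^ 2
      = W π a * u a ^ 2 + (2 * (W π a * (u a * v a)) + W π a * v a ^ 2) := fun a => by ring
  simp_rw [h, Finset.sum_add_distrib]
  rw [Finset.mul_sum]
  ring

lemma efron_stein (hπ0 : ∀ i x, 0 ≤ π i x) (hπ1 : ∀ i, ∑ x, π i x = 1)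
    (s : Finset (Fin n)) :
    ∀ f : (∀ j, A j) → ℝ,
      nrm2 π (fun a => f a - Es π s f a) ≤ ∑ i ∈ s, nrm2 π (fun a => f a - Ei π i f a) := by
  induction s using Finset.induction_on with
  | empty =>
    intro f
    rw [Es_empty π hπ1]
    simp [nrm2]
  | @insert i s hi ih =>
    intro f
    have hg : Ei π i (Ei π i f) = Ei π i f := Ei_Ei π hπ1 i f
    have hEs : Es π (insert i s) f = Es π s (Ei π i f) := (Es_Ei π hπ1 hi f).symm
    have hdecomp : (fun a => f a - Es π (insert i s) f a)
        = fun a => (f a - Ei π i f a) + (Ei π i f a - Es π s (Ei π i f) a) := by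
      funext a; rw [hEs]; ring
    have hu : Ei π i (fun a => f a - Ei π i f a) = fun _ => 0 := by
      rw [Ei_sub]; funext a; rw [hg]; ring
    have hv : Ei π i (fun a => Ei π i f a - Es π s (Ei π i f) a)
        = fun a => Ei π i f a - Es π s (Ei π i f) a := by
      rw [Ei_sub]
      have h2 : Ei π i (Es π s (Ei π i f)) = Es π s (Ei π i f) := by
        rw [Es_insert π hπ1 hi (Ei π i f), ← Es_Ei π hπ1 hi (Ei π i f), hg]
      rw [hg, h2]
    have hip : ip π (fun a => f a - Ei π i f a)
        (fun a => Ei π i f a - Es π s (Ei π i f) a) = 0 := by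
      conv_lhs => rw [← hv]
      rw [ip_Ei, hu]
      simp [ip]
    have hpyth := nrm2_add π (fun a => f a - Ei π i f a)
      (fun a => Ei π i f a - Es π s (Ei π i f) a)
    rw [hdecomp, hpyth, hip]
    have hv_le : nrm2 π (fun a => Ei π i f a - Es π s (Ei π i f) a)
        ≤ ∑ j ∈ s, nrm2 π (fun a => Ei π i f a - Ei π j (Ei π i f) a) := ih (Ei π i f)
    have hterm : ∀ j ∈ s, nrm2 π (fun a => Ei π i f a - Ei π j (Ei π i f) a)
        ≤ nrm2 π (fun a => f a - Ei π j f a) := by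
      intro j hj
      have hij : i ≠ j := fun h => hi (h ▸ hj)
      have heq : (fun a => Ei π i f a - Ei π j (Ei π i f) a)
          = Ei π i (fun a => f a - Ei π j f a) := by
        rw [Ei_sub]
        simp only [Ei_comm π hij f]
      rw [heq]
      exact nrm2_Ei_le π hπ0 hπ1 i _
    rw [Finset.sum_insert hi]
    have hsum := Finset.sum_le_sum hterm
    linarith [le_trans hv_le hsum]

end EfronSteinAux

open EfronSteinAux in
/-- The variance of the joint advantage is bounded by the sum of the variances of
the local advantages `A^i(a^{-i}, a^i) = Q(a) − E_{x ~ π_i}[Q(a^{-i}, x)]`. -/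
theorem advantage_variance_upper_bound
    {n : ℕ} {A : Fin n → Type*} [∀ i, Fintype (A i)] [∀ i, Nonempty (A i)]
    (π : ∀ i, A i → ℝ) (hπ0 : ∀ i x, 0 ≤ π i x) (hπ1 : ∀ i, ∑ x, π i x = 1)
    (Q : (∀ i, A i) → ℝ) :
    varOf (fun a : ∀ i, A i => ∏ i, π i (a i))
        (fun a => Q a - ∑ b : ∀ i, A i, (∏ i, π i (b i)) * Q b)
      ≤ ∑ i : Fin n,
          varOf (fun a : ∀ i, A i => ∏ j, π j (a j))
            (fun a => Q a - ∑ x : A i, π i x * Q (Function.update a i x)) := by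
  have varOf_eq : ∀ (f : (∀ i, A i) → ℝ), (∑ a, W π a * f a = 0) →
      varOf (W π) f = nrm2 π f := by
    intro f h
    rw [varOf, nrm2, h]
    ring
  have hmean : ∑ a : ∀ i, A i, W π a * (Q a - ∑ b : ∀ i, A i, W π b * Q b) = 0 := by
    simp_rw [mul_sub]
    rw [Finset.sum_sub_distrib, ← Finset.sum_mul, sum_W π hπ1, one_mul, sub_self]
  have hmean2 : ∀ i : Fin n, ∑ a : ∀ i, A i, W π a * (Q a - Ei π i Q a) = 0 := by
    intro i
    simp_rw [mul_sub]
    rw [Finset.sum_sub_distrib, sum_W_Ei π hπ1 i Q, sub_self]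
  calc varOf (fun a : ∀ i, A i => ∏ i, π i (a i))
        (fun a => Q a - ∑ b : ∀ i, A i, (∏ i, π i (b i)) * Q b)
      = nrm2 π (fun a => Q a - Es π univ Q a) := by
        show varOf (W π) (fun a => Q a - ∑ b : ∀ i, A i, W π b * Q b)
            = nrm2 π (fun a => Q a - Es π univ Q a)
        rw [varOf_eq _ hmean]
        simp only [nrm2]
        refine Finset.sum_congr rfl fun a _ => ?_
        rw [Es_univ]
    _ ≤ ∑ i ∈ univ, nrm2 π (fun a => Q a - Ei π i Q a) := efron_stein π hπ0 hπ1 univ Q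
    _ = ∑ i : Fin n,
          varOf (fun a : ∀ i, A i => ∏ j, π j (a j))
            (fun a => Q a - ∑ x : A i, π i x * Q (Function.update a i x)) := by
        refine Finset.sum_congr rfl fun i _ => ?_
        show nrm2 π (fun a => Q a - Ei π i Q a) = varOf (W π) (fun a => Q a - Ei π i Q a)
        rw [varOf_eq _ (hmean2 i)]
end

section
/- For a two-agent one-step setting, the excess variance of the centralised policy-gradient estimator over the decentralised one equals the expectation E_{a ~ π}[ ||∇ log π^i(a^i)||² · (Q(a) − Q^i(a^i))² ], where Q^i(a^i) = E_{a^{-i} ~ π^{-i}}[Q(a^{-i}, a^i)]. In particular this difference of variances is nonnegative. -/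
open Finset

/-- The excess total variance of the centralised estimator `Q(a)·g(a^i)` over the
decentralised estimator `Q^i(a^i)·g(a^i)` equals
`E_{a ~ π}[‖g(a^i)‖² (Q(a) − Q^i(a^i))²]`; in particular it is nonnegative. -/
theorem centralised_minus_decentralised_variance
    {Ani Ai : Type*} [Fintype Ani] [Fintype Ai] [Nonempty Ani] [Nonempty Ai] {d : ℕ}
    (πni : Ani → ℝ) (πi : Ai → ℝ)
    (hni0 : ∀ b, 0 ≤ πni b) (hni1 : ∑ b, πni b = 1)
    (hi0 : ∀ x, 0 ≤ πi x) (hi1 : ∑ x, πi x = 1)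
    (g : Ai → Fin d → ℝ) (hg : ∀ j, ∑ x, πi x * g x j = 0)
    (Q : Ani → Ai → ℝ) :
    (∑ j : Fin d, varOf (fun p : Ani × Ai => πni p.1 * πi p.2)
          (fun p => Q p.1 p.2 * g p.2 j))
      - (∑ j : Fin d, varOf πi (fun x => (∑ b, πni b * Q b x) * g x j))
      = ∑ p : Ani × Ai, (πni p.1 * πi p.2) * (∑ j, (g p.2 j) ^ 2)
          * (Q p.1 p.2 - ∑ b, πni b * Q b p.2) ^ 2
    ∧ 0 ≤ (∑ j : Fin d, varOf (fun p : Ani × Ai => πni p.1 * πi p.2)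
            (fun p => Q p.1 p.2 * g p.2 j))
        - (∑ j : Fin d, varOf πi (fun x => (∑ b, πni b * Q b x) * g x j)) := by
  set Qi : Ai → ℝ := fun x => ∑ b, πni b * Q b x with hQi
  have key : ∀ x, ∑ b, πni b * (Q b x - Qi x) ^ 2
      = (∑ b, πni b * Q b x ^ 2) - Qi x ^ 2 := by
    intro x
    have h2 : (∑ b, πni b * Q b x) = Qi x := rfl
    have h1 : ∑ b, πni b * (Q b x - Qi x) ^ 2
        = ∑ b, (πni b * Q b x ^ 2 - 2 * Qi x * (πni b * Q b x) + Qi x ^ 2 * πni b) :=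
      Finset.sum_congr rfl fun b _ => by ring
    rw [h1, Finset.sum_add_distrib, Finset.sum_sub_distrib, ← Finset.mul_sum, ← Finset.mul_sum,
      hni1, h2]
    ring
  have hmean : ∀ j, (∑ p : Ani × Ai, (πni p.1 * πi p.2) * (Q p.1 p.2 * g p.2 j))
      = ∑ x, πi x * (Qi x * g x j) := by
    intro j
    rw [Fintype.sum_prod_type_right]
    refine Finset.sum_congr rfl fun x _ => ?_
    have h2 : (∑ b, πni b * Q b x) = Qi x := rfl
    rw [← h2, Finset.sum_mul, Finset.mul_sum]
    exact Finset.sum_congr rfl fun b _ => by ring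
  have hsq : ∀ j, (∑ p : Ani × Ai, (πni p.1 * πi p.2) * (Q p.1 p.2 * g p.2 j) ^ 2)
      - (∑ x, πi x * (Qi x * g x j) ^ 2)
      = ∑ p : Ani × Ai, (πni p.1 * πi p.2) * (g p.2 j) ^ 2 * (Q p.1 p.2 - Qi p.2) ^ 2 := by
    intro j
    rw [Fintype.sum_prod_type_right, Fintype.sum_prod_type_right, ← Finset.sum_sub_distrib]
    refine Finset.sum_congr rfl fun x _ => ?_
    dsimp only
    have e1 : ∑ b, (πni b * πi x) * (g x j) ^ 2 * (Q b x - Qi x) ^ 2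
        = (πi x * (g x j) ^ 2) * ∑ b, πni b * (Q b x - Qi x) ^ 2 := by
      rw [Finset.mul_sum]; exact Finset.sum_congr rfl fun b _ => by ring
    have e2 : ∑ b, (πni b * πi x) * (Q b x * g x j) ^ 2
        = (πi x * (g x j) ^ 2) * ∑ b, πni b * Q b x ^ 2 := by
      rw [Finset.mul_sum]; exact Finset.sum_congr rfl fun b _ => by ring
    rw [e1, e2, key]; ring
  have step : ∀ p : Ani × Ai, (πni p.1 * πi p.2) * (∑ j, (g p.2 j) ^ 2)
        * (Q p.1 p.2 - Qi p.2) ^ 2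
      = ∑ j, (πni p.1 * πi p.2) * (g p.2 j) ^ 2 * (Q p.1 p.2 - Qi p.2) ^ 2 := by
    intro p
    rw [Finset.mul_sum, Finset.sum_mul]
  have hmain : (∑ j : Fin d, varOf (fun p : Ani × Ai => πni p.1 * πi p.2)
          (fun p => Q p.1 p.2 * g p.2 j))
      - (∑ j : Fin d, varOf πi (fun x => Qi x * g x j))
      = ∑ p : Ani × Ai, (πni p.1 * πi p.2) * (∑ j, (g p.2 j) ^ 2)
          * (Q p.1 p.2 - Qi p.2) ^ 2 := by
    simp only [step]
    rw [Finset.sum_comm, ← Finset.sum_sub_distrib]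
    refine Finset.sum_congr rfl fun j _ => ?_
    simp only [varOf]
    rw [hmean j]
    linarith [hsq j]
  refine ⟨hmain, hmain ▸ ?_⟩
  refine Finset.sum_nonneg fun p _ => ?_
  have h1 : 0 ≤ πni p.1 * πi p.2 := mul_nonneg (hni0 p.1) (hi0 p.2)
  have h2 : 0 ≤ ∑ j, (g p.2 j) ^ 2 := Finset.sum_nonneg fun j _ => sq_nonneg _
  exact mul_nonneg (mul_nonneg h1 h2) (sq_nonneg _)
end

section
/- In the two-agent one-step setting, the excess variance of the centralised estimator over the decentralised one is bounded by B² · Σ_{j≠i} ε_j², where B = sup_{a^i} ||g(a^i)||, and ε_j = sup_a |A^j(a^{-j}, a^j)| bounds agent j's local advantage A^j(a^{-j},a^j) = Q(a) − E_{a'^j ~ π_j}[Q(a^{-j}, a'^j)]. Consequently the excess variance is at most (n−1)·(εB)² with ε = max_j ε_j. -/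
open Finset

open Function

/-!
Conditioning on agent `i`'s action `x`, the excess variance is `∑ₓ π_i(x) ‖g x‖² Var(Q(·, x))`,
the variance being over the other agents' actions, so it suffices to show
`Var(Q(·, x)) ≤ ∑_{j ≠ i} ε_j²`. This is an Efron–Stein type bound: averaging out the coordinates
`j ≠ i` one at a time, each step lowers the second moment by a conditional variance in coordinate
`j`, which is at most `ε_j²` because averaging over the other coordinates is a contraction that
commutes with averaging over `j`.
-/

theorem varOf_eq_sum_mul_sq_sub {α : Type*} [Fintype α] {w : α → ℝ} (hw : ∑ a, w a = 1)
    (f : α → ℝ) : varOf w f = ∑ a, w a * (f a - ∑ b, w b * f b) ^ 2 := by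
  set m := ∑ b, w b * f b
  have hexpand : ∀ a, w a * (f a - m) ^ 2 = w a * f a ^ 2 - 2 * m * (w a * f a) + m ^ 2 * w a :=
    fun a => by ring
  rw [varOf, sum_congr rfl fun a _ => hexpand a, sum_add_distrib, sum_sub_distrib, ← mul_sum,
    ← mul_sum, hw]
  ring

theorem varOf_le_sq {α : Type*} [Fintype α] {w : α → ℝ} (hw0 : ∀ a, 0 ≤ w a)
    (hw1 : ∑ a, w a = 1) {f : α → ℝ} {c : ℝ} (hc : ∀ a, |f a - ∑ b, w b * f b| ≤ c) :
    varOf w f ≤ c ^ 2 := by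
  rw [varOf_eq_sum_mul_sq_sub hw1]
  calc ∑ a, w a * (f a - ∑ b, w b * f b) ^ 2
      ≤ ∑ a, w a * c ^ 2 :=
        sum_le_sum fun a _ => mul_le_mul_of_nonneg_left
          (sq_le_sq' (abs_le.mp (hc a)).1 (abs_le.mp (hc a)).2) (hw0 a)
    _ = c ^ 2 := by rw [← sum_mul, hw1, one_mul]

section ProductWeight

variable {ι : Type*} [Fintype ι] [DecidableEq ι] {A : ι → Type*} {π : ∀ k, A k → ℝ}

variable (π) in
def prodWeight (a : ∀ k, A k) : ℝ := ∏ k, π k (a k)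

theorem prodWeight_update (a : ∀ k, A k) (k : ι) (x : A k) :
    prodWeight π (update a k x) = π k x * ∏ j ∈ univ.erase k, π j (a j) := by
  rw [prodWeight, ← mul_prod_erase _ _ (mem_univ k), update_self]
  congr 1
  exact prod_congr rfl fun j hj => by rw [update_of_ne (ne_of_mem_erase hj)]

theorem prodWeight_update_mul (a : ∀ k, A k) (k : ι) (x : A k) :
    prodWeight π (update a k x) * π k (a k) = prodWeight π a * π k x := by
  conv_rhs => rw [← update_eq_self k a]
  rw [prodWeight_update, prodWeight_update]
  ring

variable [∀ k, Fintype (A k)]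

variable (π) in
def prodMean (f : (∀ k, A k) → ℝ) : ℝ := ∑ a, prodWeight π a * f a

theorem sum_prodWeight (hπ1 : ∀ k, ∑ x, π k x = 1) : ∑ a, prodWeight π a = 1 := by
  simp [prodWeight, ← Fintype.prod_sum, hπ1]

theorem prodMean_const (hπ1 : ∀ k, ∑ x, π k x = 1) (c : ℝ) : prodMean π (fun _ => c) = c := by
  rw [prodMean, ← sum_mul, sum_prodWeight hπ1, one_mul]

theorem prodMean_mono (hπ0 : ∀ k x, 0 ≤ π k x) {f g : (∀ k, A k) → ℝ} (hfg : ∀ a, f a ≤ g a) :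
    prodMean π f ≤ prodMean π g := by
  unfold prodMean
  exact sum_le_sum fun a _ =>
    mul_le_mul_of_nonneg_left (hfg a) (prod_nonneg fun k _ => hπ0 k (a k))

theorem prodMean_sub (f g : (∀ k, A k) → ℝ) :
    prodMean π (f - g) = prodMean π f - prodMean π g := by
  simp only [prodMean, Pi.sub_apply, mul_sub, sum_sub_distrib]

variable (π) in
def avgAt (k : ι) (f : (∀ k, A k) → ℝ) (a : ∀ k, A k) : ℝ :=
  ∑ x, π k x * f (update a k x)

/-- The conditional expectation of `f` given the coordinates outside `S`. -/
def avgOn (π : ∀ k, A k → ℝ) (S : Finset ι) (f : (∀ k, A k) → ℝ) (a : ∀ k, A k) : ℝ :=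
  ∑ b, prodWeight π b * f (S.piecewise b a)

/-- Resampling coordinate `k` preserves the product weight: `(a, x) ↦ (update a k x, a k)` is an
involution of `(∀ k, A k) × A k` that leaves `prodWeight π a * π k x` unchanged. -/
theorem prodMean_avgAt (hπ1 : ∀ k, ∑ x, π k x = 1) (k : ι) (f : (∀ k, A k) → ℝ) :
    prodMean π (avgAt π k f) = prodMean π f := by
  let σ : Equiv.Perm ((∀ k, A k) × A k) :=
    Involutive.toPerm (fun p => (update p.1 k p.2, p.1 k)) fun p => by simp
  calc prodMean π (avgAt π k f)
      = ∑ p : (∀ k, A k) × A k, prodWeight π p.1 * π k p.2 * f (update p.1 k p.2) := by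
        simp only [prodMean, avgAt, Fintype.sum_prod_type, mul_sum, mul_assoc]
    _ = ∑ p : (∀ k, A k) × A k, prodWeight π p.1 * π k p.2 * f p.1 := by
        rw [← Equiv.sum_comp σ]
        refine sum_congr rfl fun p _ => ?_
        show prodWeight π (update p.1 k p.2) * π k (p.1 k) * f (update (update p.1 k p.2) k (p.1 k))
          = _
        rw [update_idem, update_eq_self, prodWeight_update_mul]
    _ = prodMean π f := by
        simp only [prodMean, Fintype.sum_prod_type, mul_right_comm _ _ (f _), ← mul_sum, hπ1,
          mul_one]

theorem prodMean_eq_sum_mul_prodMean_update (hπ1 : ∀ k, ∑ x, π k x = 1) (k : ι)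
    (f : (∀ k, A k) → ℝ) :
    prodMean π f = ∑ x, π k x * prodMean π (fun a => f (update a k x)) := by
  rw [← prodMean_avgAt hπ1 k]
  simp only [prodMean, avgAt, mul_sum]
  rw [sum_comm]
  exact sum_congr rfl fun x _ => sum_congr rfl fun a _ => by ring

theorem avgOn_empty (hπ1 : ∀ k, ∑ x, π k x = 1) (f : (∀ k, A k) → ℝ) : avgOn π ∅ f = f := by
  funext a
  rw [avgOn]
  simp only [piecewise_empty]
  rw [← sum_mul, sum_prodWeight hπ1, one_mul]

theorem avgOn_sub (S : Finset ι) (f g : (∀ k, A k) → ℝ) :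
    avgOn π S (f - g) = avgOn π S f - avgOn π S g := by
  funext a
  simp only [avgOn, Pi.sub_apply, mul_sub, sum_sub_distrib]

theorem abs_avgOn_le (hπ0 : ∀ k x, 0 ≤ π k x) (hπ1 : ∀ k, ∑ x, π k x = 1) (S : Finset ι)
    {f : (∀ k, A k) → ℝ} {c : ℝ} (hf : ∀ a, |f a| ≤ c) (a : ∀ k, A k) :
    |avgOn π S f a| ≤ c := by
  rw [show avgOn π S f a = prodMean π fun b => f (S.piecewise b a) from rfl, abs_le]
  constructor
  · simpa only [prodMean_const hπ1] using
      prodMean_mono hπ0 (f := fun _ => -c) fun b => (abs_le.mp (hf _)).1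
  · simpa only [prodMean_const hπ1] using
      prodMean_mono hπ0 (g := fun _ => c) fun b => (abs_le.mp (hf _)).2

theorem avgAt_avgOn_comm {S : Finset ι} {k : ι} (hk : k ∉ S) (f : (∀ k, A k) → ℝ) :
    avgAt π k (avgOn π S f) = avgOn π S (avgAt π k f) := by
  funext a
  simp only [avgAt, avgOn, mul_sum, S.update_piecewise_of_notMem _ _ hk]
  rw [sum_comm]
  exact sum_congr rfl fun b _ => sum_congr rfl fun x _ => by ring

theorem avgOn_insert (hπ1 : ∀ k, ∑ x, π k x = 1) {S : Finset ι} {k : ι} (hk : k ∉ S)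
    (f : (∀ k, A k) → ℝ) : avgOn π (insert k S) f = avgAt π k (avgOn π S f) := by
  funext a
  have hpiece : ∀ b x, (insert k S).piecewise (update b k x) a = S.piecewise b (update a k x) :=
    fun b x => by
      rw [piecewise_insert, update_self,
        S.piecewise_congr (fun j hj => update_of_ne (ne_of_mem_of_not_mem hj hk) x b)
          fun _ _ => rfl,
        S.update_piecewise_of_notMem _ _ hk]
  rw [avgOn, ← prodMean, prodMean_eq_sum_mul_prodMean_update hπ1 k]
  simp only [prodMean, hpiece]
  rfl

theorem prodMean_sq_sub_prodMean_avgAt_sq_le (hπ0 : ∀ k x, 0 ≤ π k x)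
    (hπ1 : ∀ k, ∑ x, π k x = 1) {k : ι} {f : (∀ k, A k) → ℝ} {c : ℝ}
    (hc : ∀ a, |f a - avgAt π k f a| ≤ c) :
    prodMean π (f ^ 2) - prodMean π (avgAt π k f ^ 2) ≤ c ^ 2 := by
  rw [← prodMean_avgAt hπ1 k (f ^ 2), ← prodMean_sub, ← prodMean_const hπ1 (c ^ 2)]
  -- `avgAt π k (f ^ 2) a - avgAt π k f a ^ 2` is the variance of `f (update a k ·)`.
  refine prodMean_mono hπ0 fun a => varOf_le_sq (hπ0 k) (hπ1 k) fun x => ?_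
  simpa only [avgAt, update_idem] using hc (update a k x)

theorem prodMean_sq_sub_prodMean_avgOn_sq_le (hπ0 : ∀ k x, 0 ≤ π k x)
    (hπ1 : ∀ k, ∑ x, π k x = 1) {f : (∀ k, A k) → ℝ} {c : ι → ℝ} (S : Finset ι)
    (hc : ∀ k ∈ S, ∀ a, |f a - avgAt π k f a| ≤ c k) :
    prodMean π (f ^ 2) - prodMean π (avgOn π S f ^ 2) ≤ ∑ k ∈ S, c k ^ 2 := by
  induction S using Finset.induction_on with
  | empty => simp [avgOn_empty hπ1]
  | insert k S hk ih =>
    have hdev : ∀ a, |avgOn π S f a - avgAt π k (avgOn π S f) a| ≤ c k := fun a => by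
      rw [avgAt_avgOn_comm hk, ← Pi.sub_apply, ← avgOn_sub]
      exact abs_avgOn_le hπ0 hπ1 S (hc k (mem_insert_self k S)) a
    rw [sum_insert hk, avgOn_insert hπ1 hk]
    linarith [ih fun j hj => hc j (mem_insert_of_mem hj),
      prodMean_sq_sub_prodMean_avgAt_sq_le hπ0 hπ1 hdev]

theorem varOf_prodWeight_update_le (hπ0 : ∀ k x, 0 ≤ π k x) (hπ1 : ∀ k, ∑ x, π k x = 1)
    {Q : (∀ k, A k) → ℝ} {ε : ι → ℝ} (hε : ∀ k a, |Q a - avgAt π k Q a| ≤ ε k) (i : ι)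
    (x : A i) :
    varOf (prodWeight π) (fun b => Q (update b i x)) ≤ ∑ k ∈ univ.erase i, ε k ^ 2 := by
  set f : (∀ k, A k) → ℝ := fun b => Q (update b i x)
  have hconst : avgOn π (univ.erase i) f = fun _ => prodMean π f := by
    funext a
    simp only [avgOn, piecewise_erase_univ, update_idem, f, prodMean]
  have hdev : ∀ k ∈ univ.erase i, ∀ a, |f a - avgAt π k f a| ≤ ε k := fun k hk a => by
    simpa only [f, avgAt, update_comm (ne_of_mem_erase hk)] using hε k (update a i x)
  have hmean_sq : prodMean π (avgOn π (univ.erase i) f ^ 2) = prodMean π f ^ 2 := by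
    rw [hconst]
    exact prodMean_const hπ1 _
  calc varOf (prodWeight π) f
      = prodMean π (f ^ 2) - prodMean π (avgOn π (univ.erase i) f ^ 2) := by rw [hmean_sq]; rfl
    _ ≤ _ := prodMean_sq_sub_prodMean_avgOn_sq_le hπ0 hπ1 _ hdev

theorem varOf_mul_sub_varOf_mul_prodMean_update (hπ1 : ∀ k, ∑ x, π k x = 1)
    (Q : (∀ k, A k) → ℝ) (i : ι) (G : A i → ℝ) :
    varOf (prodWeight π) (fun a => Q a * G (a i))
        - varOf (π i) (fun x => prodMean π (fun b => Q (update b i x)) * G x)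
      = ∑ x, π i x * G x ^ 2 * varOf (prodWeight π) (fun b => Q (update b i x)) := by
  have hmean : prodMean π (fun a => Q a * G (a i))
      = ∑ x, π i x * (prodMean π (fun b => Q (update b i x)) * G x) := by
    rw [prodMean_eq_sum_mul_prodMean_update hπ1 i]
    simp only [update_self, prodMean, sum_mul, mul_assoc]
  have hsq : prodMean π (fun a => (Q a * G (a i)) ^ 2)
      = ∑ x, π i x * (G x ^ 2 * prodMean π (fun b => Q (update b i x) ^ 2)) := by
    rw [prodMean_eq_sum_mul_prodMean_update hπ1 i]
    simp only [update_self, prodMean, mul_sum]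
    exact sum_congr rfl fun x _ => sum_congr rfl fun a _ => by ring
  change prodMean π (fun a => (Q a * G (a i)) ^ 2) - prodMean π (fun a => Q a * G (a i)) ^ 2
    - _ = _
  rw [hmean, hsq]
  simp only [varOf, sub_sub_sub_cancel_right, ← sum_sub_distrib]
  exact sum_congr rfl fun x _ => by rw [prodMean, prodMean]; ring

theorem sum_varOf_mul_sub_sum_varOf_le (hπ0 : ∀ k x, 0 ≤ π k x) (hπ1 : ∀ k, ∑ x, π k x = 1)
    {Q : (∀ k, A k) → ℝ} {ε : ι → ℝ} (hε : ∀ k a, |Q a - avgAt π k Q a| ≤ ε k) (i : ι)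
    {κ : Type*} [Fintype κ] (g : A i → κ → ℝ) {B : ℝ} (hB : ∀ x, ∑ j, g x j ^ 2 ≤ B ^ 2) :
    (∑ j, varOf (prodWeight π) (fun a => Q a * g (a i) j))
        - ∑ j, varOf (π i) (fun x => prodMean π (fun b => Q (update b i x)) * g x j)
      ≤ B ^ 2 * ∑ k ∈ univ.erase i, ε k ^ 2 := by
  set S := ∑ k ∈ univ.erase i, ε k ^ 2
  have hbound : ∀ x, (∑ j, g x j ^ 2) * varOf (prodWeight π) (fun b => Q (update b i x))
      ≤ B ^ 2 * S := fun x =>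
    (mul_le_mul_of_nonneg_left (varOf_prodWeight_update_le hπ0 hπ1 hε i x)
      (sum_nonneg fun j _ => sq_nonneg _)).trans
      (mul_le_mul_of_nonneg_right (hB x) (sum_nonneg fun k _ => sq_nonneg _))
  rw [← sum_sub_distrib]
  calc ∑ j, (varOf (prodWeight π) (fun a => Q a * g (a i) j)
          - varOf (π i) (fun x => prodMean π (fun b => Q (update b i x)) * g x j))
      = ∑ x, π i x * ((∑ j, g x j ^ 2) * varOf (prodWeight π) (fun b => Q (update b i x))) := by
        rw [sum_congr rfl fun j _ => varOf_mul_sub_varOf_mul_prodMean_update hπ1 Q i fun x => g x j,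
          sum_comm]
        simp only [mul_sum, sum_mul, mul_assoc]
    _ ≤ ∑ x, π i x * (B ^ 2 * S) :=
        sum_le_sum fun x _ => mul_le_mul_of_nonneg_left (hbound x) (hπ0 i x)
    _ = B ^ 2 * S := by rw [← sum_mul, hπ1 i, one_mul]

theorem sum_erase_sq_le {ε : ι → ℝ} {εmax : ℝ} (hε0 : ∀ k, 0 ≤ ε k) (hεmax : ∀ k, ε k ≤ εmax)
    (i : ι) : ∑ k ∈ univ.erase i, ε k ^ 2 ≤ (Fintype.card ι - 1) * εmax ^ 2 := by
  have := sum_le_card_nsmul (univ.erase i) (fun k => ε k ^ 2) (εmax ^ 2) fun k _ =>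
    pow_le_pow_left₀ (hε0 k) (hεmax k) 2
  rwa [nsmul_eq_mul, cast_card_erase_of_mem (mem_univ i), card_univ] at this

end ProductWeight

theorem excess_variance_centralised_bound_general
    {n : ℕ} {A : Fin n → Type*} [∀ i, Fintype (A i)] {d : ℕ}
    (π : ∀ i, A i → ℝ) (hπ0 : ∀ i x, 0 ≤ π i x) (hπ1 : ∀ i, ∑ x, π i x = 1)
    (Q : (∀ i, A i) → ℝ) (i : Fin n)
    (g : A i → Fin d → ℝ)
    (B : ℝ) (hB : ∀ x, ∑ j, (g x j) ^ 2 ≤ B ^ 2)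
    (ε : Fin n → ℝ) (hε0 : ∀ j, 0 ≤ ε j)
    (hε : ∀ (j : Fin n) (a : ∀ k, A k),
      |Q a - ∑ x : A j, π j x * Q (Function.update a j x)| ≤ ε j)
    (εmax : ℝ) (hεmax : ∀ j, ε j ≤ εmax) :
    (∑ j : Fin d, varOf (fun a : ∀ k, A k => ∏ k, π k (a k))
          (fun a => Q a * g (a i) j))
      - (∑ j : Fin d, varOf (π i)
          (fun x => (∑ b : ∀ k, A k, (∏ k, π k (b k)) * Q (Function.update b i x)) * g x j))
      ≤ B ^ 2 * ∑ j ∈ Finset.univ.erase i, (ε j) ^ 2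
    ∧ (∑ j : Fin d, varOf (fun a : ∀ k, A k => ∏ k, π k (a k))
          (fun a => Q a * g (a i) j))
      - (∑ j : Fin d, varOf (π i)
          (fun x => (∑ b : ∀ k, A k, (∏ k, π k (b k)) * Q (Function.update b i x)) * g x j))
      ≤ ((n : ℝ) - 1) * (εmax * B) ^ 2 := by
  have hexcess := sum_varOf_mul_sub_sum_varOf_le hπ0 hπ1 hε i g hB
  refine ⟨hexcess, hexcess.trans ?_⟩
  have hS := sum_erase_sq_le hε0 hεmax i
  rw [Fintype.card_fin] at hS
  calc B ^ 2 * ∑ j ∈ univ.erase i, ε j ^ 2 ≤ B ^ 2 * (((n : ℝ) - 1) * εmax ^ 2) := by gcongr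
    _ = ((n : ℝ) - 1) * (εmax * B) ^ 2 := by ring

/-- The excess total variance of the centralised MAPG estimator over the decentralised
one is bounded by `B² Σ_{j≠i} ε_j²`, and hence by `(n−1)(εB)²`. -/
theorem excess_variance_centralised_bound
    {n : ℕ} {A : Fin n → Type*} [∀ i, Fintype (A i)] [∀ i, Nonempty (A i)] {d : ℕ}
    (π : ∀ i, A i → ℝ) (hπ0 : ∀ i x, 0 ≤ π i x) (hπ1 : ∀ i, ∑ x, π i x = 1)
    (Q : (∀ i, A i) → ℝ) (i : Fin n)
    (g : A i → Fin d → ℝ) (hg : ∀ j, ∑ x, π i x * g x j = 0)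
    (B : ℝ) (hB0 : 0 ≤ B) (hB : ∀ x, ∑ j, (g x j) ^ 2 ≤ B ^ 2)
    (ε : Fin n → ℝ) (hε0 : ∀ j, 0 ≤ ε j)
    (hε : ∀ (j : Fin n) (a : ∀ k, A k),
      |Q a - ∑ x : A j, π j x * Q (Function.update a j x)| ≤ ε j)
    (εmax : ℝ) (hεmax : ∀ j, ε j ≤ εmax) :
    (∑ j : Fin d, varOf (fun a : ∀ k, A k => ∏ k, π k (a k))
          (fun a => Q a * g (a i) j))
      - (∑ j : Fin d, varOf (π i)
          (fun x => (∑ b : ∀ k, A k, (∏ k, π k (b k)) * Q (Function.update b i x)) * g x j))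
      ≤ B ^ 2 * ∑ j ∈ Finset.univ.erase i, (ε j) ^ 2
    ∧ (∑ j : Fin d, varOf (fun a : ∀ k, A k => ∏ k, π k (a k))
          (fun a => Q a * g (a i) j))
      - (∑ j : Fin d, varOf (π i)
          (fun x => (∑ b : ∀ k, A k, (∏ k, π k (b k)) * Q (Function.update b i x)) * g x j))
      ≤ ((n : ℝ) - 1) * (εmax * B) ^ 2 :=
  excess_variance_centralised_bound_general π hπ0 hπ1 Q i g B hB ε hε0 hε εmax hεmax
end

section
/- In the one-step setting, the COMA estimator A^i(a^{-i},a^i)·g(a^i), where A^i(a^{-i},a^i) = Q(a^{-i},a^i) − E_{a'^i ~ π_i}[Q(a^{-i},a'^i)], satisfies: Var over a ~ π of the COMA estimator minus Var over a^i ~ π_i of the decentralised estimator Q^i(a^i)·g(a^i) is at most (ε_i · B_i)², where B_i = sup ||g||, ε_i = sup |A^i|. -/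
/-!
Both estimators have the same mean: redrawing `a^i` from `π_i` does not change the joint law,
and the baseline `∑ x, π_i x * Q (update a i x)` does not depend on `a^i`, so `E g = 0` removes
it. The excess variance is therefore the second moment of the COMA estimator, at most `(ε_i B_i)²`,
minus that of the decentralised one, which is nonnegative.
-/

open Finset

open Function

theorem sum_varOf_sub_sum_varOf_le {ι α β : Type*} [Fintype ι] [Fintype α] [Fintype β]
    (w : α → ℝ) (v : β → ℝ) (hv : ∀ b, 0 ≤ v b) (f : ι → α → ℝ) (h : ι → β → ℝ) (C : ℝ)
    (hmean : ∀ j, ∑ a, w a * f j a = ∑ b, v b * h j b)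
    (hsq : ∑ j, ∑ a, w a * f j a ^ 2 ≤ C) :
    ∑ j, varOf w (f j) - ∑ j, varOf v (h j) ≤ C := by
  have hsq_nonneg : 0 ≤ ∑ j, ∑ b, v b * h j b ^ 2 :=
    sum_nonneg fun j _ => sum_nonneg fun b _ => mul_nonneg (hv b) (sq_nonneg _)
  simp only [varOf, sum_sub_distrib, hmean]
  linarith

theorem sum_sum_mul_mul_sq_le {ι α : Type*} [Fintype ι] [Fintype α]
    (w : α → ℝ) (hw0 : ∀ a, 0 ≤ w a) (hw1 : ∑ a, w a = 1)
    (c : α → ℝ) (ε : ℝ) (hc : ∀ a, |c a| ≤ ε) (g : α → ι → ℝ) (B : ℝ)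
    (hg : ∀ a, ∑ j, g a j ^ 2 ≤ B ^ 2) :
    ∑ j, ∑ a, w a * (c a * g a j) ^ 2 ≤ (ε * B) ^ 2 :=
  calc ∑ j, ∑ a, w a * (c a * g a j) ^ 2
      = ∑ a, w a * (c a ^ 2 * ∑ j, g a j ^ 2) := by
        rw [sum_comm]
        simp only [mul_sum, mul_pow]
    _ ≤ ∑ a, w a * (ε ^ 2 * B ^ 2) := by
        refine sum_le_sum fun a _ => mul_le_mul_of_nonneg_left ?_ (hw0 a)
        exact mul_le_mul (sq_le_sq' (abs_le.mp (hc a)).1 (abs_le.mp (hc a)).2) (hg a)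
          (sum_nonneg fun j _ => sq_nonneg _) (sq_nonneg _)
    _ = (ε * B) ^ 2 := by rw [← sum_mul, hw1, one_mul, mul_pow]

section ProductWeights

variable {ι : Type*} [Fintype ι] [DecidableEq ι] {A : ι → Type*} (π : ∀ i, A i → ℝ)

theorem mul_prod_update (a : ∀ k, A k) (i : ι) (x : A i) :
    π i (a i) * ∏ k, π k (update a i x k) = π i x * ∏ k, π k (a k) := by
  rw [Fintype.prod_eq_mul_prod_compl i, Fintype.prod_eq_mul_prod_compl i (fun k => π k (a k)),
    prod_congr rfl fun k hk => by rw [update_of_ne (by simpa using hk)], update_self]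
  ring

variable [∀ i, Fintype (A i)]

theorem sum_prod_eq_one (hπ1 : ∀ i, ∑ x, π i x = 1) :
    ∑ a : ∀ k, A k, ∏ k, π k (a k) = 1 := by
  rw [← Fintype.prod_sum]
  simp [hπ1]

theorem sum_prod_mul_eq_sum_prod_mul_resample (hπ1 : ∀ i, ∑ x, π i x = 1) (i : ι)
    (G : (∀ k, A k) → ℝ) :
    ∑ a, (∏ k, π k (a k)) * G a
      = ∑ a, (∏ k, π k (a k)) * ∑ x, π i x * G (update a i x) := by
  -- `(x, a) ↦ (a i, update a i x)` exchanges the original and the redrawn value of `a i`.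
  have swap : Involutive fun p : A i × (∀ k, A k) => (p.2 i, update p.2 i p.1) := by
    intro p
    simp
  calc ∑ a, (∏ k, π k (a k)) * G a
      = ∑ p : A i × (∀ k, A k), π i p.1 * ((∏ k, π k (p.2 k)) * G p.2) := by
        rw [Fintype.sum_prod_type, sum_comm]
        simp only [← sum_mul, hπ1, one_mul]
    _ = ∑ p : A i × (∀ k, A k), π i p.1 * ((∏ k, π k (p.2 k)) * G (update p.2 i p.1)) := by
        refine (Fintype.sum_equiv (swap.toPerm _) _ _ fun p => ?_).symm
        simp only [Involutive.coe_toPerm]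
        rw [← mul_assoc, ← mul_assoc, mul_prod_update]
    _ = ∑ a, (∏ k, π k (a k)) * ∑ x, π i x * G (update a i x) := by
        rw [Fintype.sum_prod_type, sum_comm]
        simp only [mul_sum]
        exact sum_congr rfl fun a _ => sum_congr rfl fun x _ => by ring

theorem sum_prod_mul_advantage_mul (hπ1 : ∀ i, ∑ x, π i x = 1) (i : ι)
    (Q : (∀ k, A k) → ℝ) (g : A i → ℝ) (hg : ∑ x, π i x * g x = 0) :
    ∑ a, (∏ k, π k (a k)) * ((Q a - ∑ x, π i x * Q (update a i x)) * g (a i))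
      = ∑ x, π i x * ((∑ b, (∏ k, π k (b k)) * Q (update b i x)) * g x) := by
  have baseline_vanishes (a : ∀ k, A k) :
      ∑ x, π i x * ((Q (update a i x) - ∑ y, π i y * Q (update a i y)) * g x)
        = ∑ x, π i x * (Q (update a i x) * g x) := by
    simp only [sub_mul, mul_sub, sum_sub_distrib, sub_eq_self]
    simp only [mul_left_comm (π i _), ← mul_sum, hg, mul_zero]
  calc ∑ a, (∏ k, π k (a k)) * ((Q a - ∑ x, π i x * Q (update a i x)) * g (a i))
      = ∑ a, (∏ k, π k (a k)) * ∑ x, π i x * (Q (update a i x) * g x) := by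
        rw [sum_prod_mul_eq_sum_prod_mul_resample π hπ1 i]
        simp only [update_self, update_idem, baseline_vanishes]
    _ = ∑ x, π i x * ((∑ b, (∏ k, π k (b k)) * Q (update b i x)) * g x) := by
        simp only [mul_sum, sum_mul]
        rw [sum_comm]
        exact sum_congr rfl fun x _ => sum_congr rfl fun a _ => by ring

end ProductWeights

theorem excess_variance_coma_bound_general
    {n : ℕ} {A : Fin n → Type*} [∀ i, Fintype (A i)] {d : ℕ}
    (π : ∀ i, A i → ℝ) (hπ0 : ∀ i x, 0 ≤ π i x) (hπ1 : ∀ i, ∑ x, π i x = 1)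
    (Q : (∀ i, A i) → ℝ) (i : Fin n)
    (g : A i → Fin d → ℝ) (hg : ∀ j, ∑ x, π i x * g x j = 0)
    (Bi : ℝ) (hB : ∀ x, ∑ j, (g x j) ^ 2 ≤ Bi ^ 2)
    (εi : ℝ)
    (hε : ∀ a : ∀ k, A k,
      |Q a - ∑ x : A i, π i x * Q (Function.update a i x)| ≤ εi) :
    (∑ j : Fin d, varOf (fun a : ∀ k, A k => ∏ k, π k (a k))
          (fun a => (Q a - ∑ x : A i, π i x * Q (Function.update a i x)) * g (a i) j))
      - (∑ j : Fin d, varOf (π i)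
          (fun x => (∑ b : ∀ k, A k, (∏ k, π k (b k)) * Q (Function.update b i x)) * g x j))
      ≤ (εi * Bi) ^ 2 := by
  have hw0 (a : ∀ k, A k) : 0 ≤ ∏ k, π k (a k) := prod_nonneg fun k _ => hπ0 k (a k)
  refine sum_varOf_sub_sum_varOf_le _ _ (hπ0 i) _ _ _
    (fun j => sum_prod_mul_advantage_mul π hπ1 i Q (g · j) (hg j)) ?_
  exact sum_sum_mul_mul_sq_le _ hw0 (sum_prod_eq_one π hπ1) _ εi hε (fun a => g (a i)) Bi
    fun a => hB (a i)

/-- The excess total variance of the COMA estimator `A^i(a^{-i},a^i)·g(a^i)` over the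
decentralised estimator `Q^i(a^i)·g(a^i)` is at most `(ε_i B_i)²`. -/
theorem excess_variance_coma_bound
    {n : ℕ} {A : Fin n → Type*} [∀ i, Fintype (A i)] [∀ i, Nonempty (A i)] {d : ℕ}
    (π : ∀ i, A i → ℝ) (hπ0 : ∀ i x, 0 ≤ π i x) (hπ1 : ∀ i, ∑ x, π i x = 1)
    (Q : (∀ i, A i) → ℝ) (i : Fin n)
    (g : A i → Fin d → ℝ) (hg : ∀ j, ∑ x, π i x * g x j = 0)
    (Bi : ℝ) (hB0 : 0 ≤ Bi) (hB : ∀ x, ∑ j, (g x j) ^ 2 ≤ Bi ^ 2)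
    (εi : ℝ)
    (hε : ∀ a : ∀ k, A k,
      |Q a - ∑ x : A i, π i x * Q (Function.update a i x)| ≤ εi) :
    (∑ j : Fin d, varOf (fun a : ∀ k, A k => ∏ k, π k (a k))
          (fun a => (Q a - ∑ x : A i, π i x * Q (Function.update a i x)) * g (a i) j))
      - (∑ j : Fin d, varOf (π i)
          (fun x => (∑ b : ∀ k, A k, (∏ k, π k (b k)) * Q (Function.update b i x)) * g x j))
      ≤ (εi * Bi) ^ 2 :=
  excess_variance_coma_bound_general π hπ0 hπ1 Q i g hg Bi hB εi hε
end

section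
/- The excess local variance of a scalar baseline b over the optimal baseline b* is exactly (b − b*)² · E_{a^i ~ π_i}[ ||g(a^i)||² ], where b* = E[Q·||g||²]/E[||g||²] and the local variance of baseline b is Var_{a^i ~ π_i}[ (Q(a^{-i},a^i) − b)·g(a^i) ]. -/
open Finset

/-- The excess local variance of a baseline `b` over the optimal baseline
`b* = E[Q·‖g‖²]/E[‖g‖²]` is exactly `(b − b*)² · E[‖g‖²]`. -/
theorem excess_local_variance_formula
    {Ai : Type*} [Fintype Ai] [Nonempty Ai] {d : ℕ}
    (πi : Ai → ℝ) (h0 : ∀ x, 0 ≤ πi x) (h1 : ∑ x, πi x = 1)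
    (g : Ai → Fin d → ℝ) (hg : ∀ j, ∑ x, πi x * g x j = 0)
    (hpos : 0 < ∑ x, πi x * ∑ j, (g x j) ^ 2)
    (Qf : Ai → ℝ) (b : ℝ) :
    (∑ j : Fin d, varOf πi (fun x => (Qf x - b) * g x j))
      - (∑ j : Fin d, varOf πi (fun x =>
          (Qf x - (∑ y, πi y * (Qf y * ∑ j, (g y j) ^ 2))
            / (∑ y, πi y * ∑ j, (g y j) ^ 2)) * g x j))
      = (b - (∑ y, πi y * (Qf y * ∑ j, (g y j) ^ 2))
            / (∑ y, πi y * ∑ j, (g y j) ^ 2)) ^ 2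
        * (∑ x, πi x * ∑ j, (g x j) ^ 2) := by
  set S : ℝ := ∑ x, πi x * ∑ j, (g x j) ^ 2 with hS
  set T : ℝ := ∑ y, πi y * (Qf y * ∑ j, (g y j) ^ 2) with hT
  have hSne : S ≠ 0 := ne_of_gt hpos
  set c : ℝ := T / S with hc
  have hcS : c * S = T := div_mul_cancel₀ T hSne
  have key : ∀ t : ℝ, (∑ j : Fin d, varOf πi (fun x => (Qf x - t) * g x j))
      = (∑ x, πi x * (Qf x - t) ^ 2 * ∑ j, (g x j) ^ 2)
        - ∑ j : Fin d, (∑ x, πi x * (Qf x * g x j)) ^ 2 := by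
    intro t
    unfold varOf
    rw [Finset.sum_sub_distrib]
    congr 1
    · rw [Finset.sum_comm]
      refine Finset.sum_congr rfl fun x _ => ?_
      rw [Finset.mul_sum]
      refine Finset.sum_congr rfl fun j _ => ?_
      ring
    · refine Finset.sum_congr rfl fun j _ => ?_
      have h2 : ∑ x, πi x * ((Qf x - t) * g x j)
          = (∑ x, πi x * (Qf x * g x j)) - t * ∑ x, πi x * g x j := by
        rw [Finset.mul_sum, ← Finset.sum_sub_distrib]
        exact Finset.sum_congr rfl fun x _ => by ring
      rw [h2, hg j, mul_zero, sub_zero]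
  rw [key b, key c, sub_sub_sub_cancel_right]
  have expand : (∑ x, πi x * (Qf x - b) ^ 2 * ∑ j, (g x j) ^ 2)
      - (∑ x, πi x * (Qf x - c) ^ 2 * ∑ j, (g x j) ^ 2)
      = 2 * (c - b) * T + (b ^ 2 - c ^ 2) * S := by
    rw [hT, hS, Finset.mul_sum, Finset.mul_sum, ← Finset.sum_add_distrib,
      ← Finset.sum_sub_distrib]
    exact Finset.sum_congr rfl fun x _ => by ring
  rw [expand, ← hcS]
  ring
end

section
/- The excess local variance of the zero baseline (vanilla MAPG) over the optimal baseline is bounded: (b*)² · E[||g||²] ≤ D² · ( Var_{a^i ~ π_i}[A^i(a^{-i}, a^i)] + Q^{-i}(a^{-i})² ), where D = sup_{a^i} ||g(a^i)||, Q^{-i}(a^{-i}) = E_{a^i ~ π_i}[Q(a^{-i}, a^i)], and A^i(a^{-i},a^i) = Q(a^{-i},a^i) − Q^{-i}(a^{-i}). -/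
open Finset

/-- The excess local variance of the zero baseline (vanilla MAPG) over the optimal
baseline is bounded: `(b*)²·E[‖g‖²] ≤ D²·(Var[A^i] + (Q^{-i})²)`. -/
theorem excess_variance_vanilla_mapg_bound
    {Ai : Type*} [Fintype Ai] [Nonempty Ai] {d : ℕ}
    (πi : Ai → ℝ) (h0 : ∀ x, 0 ≤ πi x) (h1 : ∑ x, πi x = 1)
    (g : Ai → Fin d → ℝ)
    (hpos : 0 < ∑ x, πi x * ∑ j, (g x j) ^ 2)
    (D : ℝ) (hD0 : 0 ≤ D) (hD : ∀ x, ∑ j, (g x j) ^ 2 ≤ D ^ 2)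
    (Qf : Ai → ℝ) :
    ((∑ y, πi y * (Qf y * ∑ j, (g y j) ^ 2)) / (∑ y, πi y * ∑ j, (g y j) ^ 2)) ^ 2
        * (∑ x, πi x * ∑ j, (g x j) ^ 2)
      ≤ D ^ 2 * (varOf πi (fun x => Qf x - ∑ y, πi y * Qf y)
          + (∑ y, πi y * Qf y) ^ 2) := by
  set W : Ai → ℝ := fun x => ∑ j, (g x j) ^ 2 with hW
  have hWnn : ∀ x, 0 ≤ W x := fun x => Finset.sum_nonneg fun j _ => sq_nonneg _
  set S : ℝ := ∑ x, πi x * W x with hS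
  set N : ℝ := ∑ y, πi y * (Qf y * W y) with hN
  -- RHS simplifies to D² * ∑ π Q²
  have hrhs : varOf πi (fun x => Qf x - ∑ y, πi y * Qf y) + (∑ y, πi y * Qf y) ^ 2
      = ∑ x, πi x * Qf x ^ 2 := by
    set M := ∑ y, πi y * Qf y with hM
    have hB : (∑ x, πi x * (Qf x - M)) = 0 := by
      simp only [mul_sub]
      rw [Finset.sum_sub_distrib, ← Finset.sum_mul, h1, ← hM, one_mul, sub_self]
    have hA : (∑ x, πi x * (Qf x - M) ^ 2)
        = (∑ x, πi x * Qf x ^ 2) - (∑ x, πi x * Qf x) * (2 * M) + (∑ x, πi x) * M ^ 2 := by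
      rw [Finset.sum_mul, Finset.sum_mul, ← Finset.sum_sub_distrib, ← Finset.sum_add_distrib]
      exact Finset.sum_congr rfl fun x _ => by ring
    simp only [varOf]
    rw [hA, hB, h1, ← hM]
    ring
  rw [hrhs]
  -- Cauchy-Schwarz: N² ≤ (∑ π Q² W) * S
  have hcs : N ^ 2 ≤ (∑ x, πi x * Qf x ^ 2 * W x) * S := by
    have key : (∑ x, (Real.sqrt (πi x * W x) * Qf x) * Real.sqrt (πi x * W x)) ^ 2
        ≤ (∑ x, (Real.sqrt (πi x * W x) * Qf x) ^ 2) * (∑ x, (Real.sqrt (πi x * W x)) ^ 2) :=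
      Finset.sum_mul_sq_le_sq_mul_sq Finset.univ _ _
    have hsq : ∀ x, Real.sqrt (πi x * W x) ^ 2 = πi x * W x := fun x =>
      Real.sq_sqrt (mul_nonneg (h0 x) (hWnn x))
    calc N ^ 2 = (∑ x, (Real.sqrt (πi x * W x) * Qf x) * Real.sqrt (πi x * W x)) ^ 2 := by
          congr 1
          apply Finset.sum_congr rfl
          intro x _
          have : Real.sqrt (πi x * W x) * Qf x * Real.sqrt (πi x * W x)
              = Real.sqrt (πi x * W x) ^ 2 * Qf x := by ring
          rw [this, hsq x]; ring
      _ ≤ (∑ x, (Real.sqrt (πi x * W x) * Qf x) ^ 2) * (∑ x, (Real.sqrt (πi x * W x)) ^ 2) := key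
      _ = (∑ x, πi x * Qf x ^ 2 * W x) * S := by
          congr 1
          · apply Finset.sum_congr rfl; intro x _
            rw [mul_pow, hsq x]; ring
          · apply Finset.sum_congr rfl; intro x _; rw [hsq x]
  have hbound : (∑ x, πi x * Qf x ^ 2 * W x) ≤ D ^ 2 * ∑ x, πi x * Qf x ^ 2 := by
    rw [Finset.mul_sum]
    apply Finset.sum_le_sum
    intro x _
    have : πi x * Qf x ^ 2 * W x ≤ πi x * Qf x ^ 2 * D ^ 2 :=
      mul_le_mul_of_nonneg_left (hD x) (mul_nonneg (h0 x) (sq_nonneg _))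
    linarith
  have hSnn : 0 ≤ ∑ x, πi x * Qf x ^ 2 :=
    Finset.sum_nonneg fun x _ => mul_nonneg (h0 x) (sq_nonneg _)
  have h2 : N ^ 2 ≤ (D ^ 2 * ∑ x, πi x * Qf x ^ 2) * S :=
    hcs.trans (mul_le_mul_of_nonneg_right hbound hpos.le)
  rw [div_pow, div_mul_eq_mul_div, div_le_iff₀ (by positivity)]
  calc N ^ 2 * S ≤ ((D ^ 2 * ∑ x, πi x * Qf x ^ 2) * S) * S :=
        mul_le_mul_of_nonneg_right h2 hpos.le
    _ = (D ^ 2 * ∑ x, πi x * Qf x ^ 2) * S ^ 2 := by ring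
end

section
/- The excess local variance of the COMA counterfactual baseline Q^{-i}(a^{-i}) over the optimal baseline is bounded: (Q^{-i}(a^{-i}) − b*)² · E[||g||²] ≤ D² · Var_{a^i ~ π_i}[A^i(a^{-i},a^i)] ≤ (ε_i · D)², where D = sup_{a^i} ||g(a^i)||, ε_i = sup_{a^i} |A^i(a^{-i},a^i)|, A^i = Q − Q^{-i}, Q^{-i}(a^{-i}) = E_{a^i ~ π_i}[Q(a^{-i},a^i)]. -/
open Finset

/-!
Write `A = Q - Q̄` for the advantage and `n = ‖g‖²`. The gap between the counterfactual baseline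
and the optimal one is `Q̄ - b* = -E[A n] / E[n]`, so the excess variance is `E[A n]² / E[n]`.
Cauchy–Schwarz with weights `π`, in the form `(π A n)² ≤ (π A²)(π n D²)` (valid as `0 ≤ n ≤ D²`),
bounds it by `D² E[A²] = D² Var[A]`, and `Var[A] = E[A²] ≤ ε²` pointwise.
-/

section WeightedMoments

variable {α : Type*} [Fintype α] {w : α → ℝ}

lemma sum_mul_sub_weighted_mean (hw : ∑ a, w a = 1) (f : α → ℝ) :
    ∑ a, w a * (f a - ∑ b, w b * f b) = 0 := by
  simp only [mul_sub, sum_sub_distrib, ← sum_mul, hw, one_mul, sub_self]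

lemma varOf_eq_sum_mul_sq {f : α → ℝ} (hf : ∑ a, w a * f a = 0) :
    varOf w f = ∑ a, w a * f a ^ 2 := by
  rw [varOf, hf]; ring

lemma sum_mul_sq_le_sq_of_abs_le (hw0 : ∀ a, 0 ≤ w a) (hw : ∑ a, w a = 1) {f : α → ℝ} {c : ℝ}
    (hf : ∀ a, |f a| ≤ c) : ∑ a, w a * f a ^ 2 ≤ c ^ 2 :=
  calc ∑ a, w a * f a ^ 2 ≤ ∑ a, w a * c ^ 2 := by
        refine sum_le_sum fun a _ => mul_le_mul_of_nonneg_left ?_ (hw0 a)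
        exact sq_le_sq' (abs_le.mp (hf a)).1 (abs_le.mp (hf a)).2
    _ = c ^ 2 := by rw [← sum_mul, hw, one_mul]

lemma sq_sum_mul_mul_le (hw0 : ∀ a, 0 ≤ w a) (f : α → ℝ) {n : α → ℝ} {C : ℝ}
    (hn0 : ∀ a, 0 ≤ n a) (hn : ∀ a, n a ≤ C) :
    (∑ a, w a * (f a * n a)) ^ 2 ≤ C * (∑ a, w a * f a ^ 2) * ∑ a, w a * n a := by
  have hCS := sum_sq_le_sum_mul_sum_of_sq_le_mul univ (r := fun a => w a * (f a * n a))
    (f := fun a => w a * f a ^ 2) (g := fun a => C * (w a * n a))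
    (fun a _ => mul_nonneg (hw0 a) (sq_nonneg _))
    (fun a _ => mul_nonneg ((hn0 a).trans (hn a)) (mul_nonneg (hw0 a) (hn0 a)))
    (fun a _ => by
      have : n a ^ 2 ≤ C * n a := sq (n a) ▸ mul_le_mul_of_nonneg_right (hn a) (hn0 a)
      calc (w a * (f a * n a)) ^ 2 = (w a * f a) ^ 2 * n a ^ 2 := by ring
        _ ≤ (w a * f a) ^ 2 * (C * n a) := by gcongr
        _ = w a * f a ^ 2 * (C * (w a * n a)) := by ring)
  rw [← mul_sum] at hCS
  linarith

lemma weighted_mean_sub_div_eq {n : α → ℝ} (hS : ∑ a, w a * n a ≠ 0) (Q : α → ℝ) :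
    (∑ a, w a * Q a) - (∑ a, w a * (Q a * n a)) / ∑ a, w a * n a
      = -(∑ a, w a * ((Q a - ∑ b, w b * Q b) * n a)) / ∑ a, w a * n a := by
  have hsplit : ∑ a, w a * ((Q a - ∑ b, w b * Q b) * n a)
      = ∑ a, w a * (Q a * n a) - (∑ b, w b * Q b) * ∑ a, w a * n a := by
    rw [mul_sum, ← sum_sub_distrib]
    exact sum_congr rfl fun a _ => by ring
  rw [hsplit]
  field_simp
  ring

lemma sq_mean_sub_baseline_mul_le (hw0 : ∀ a, 0 ≤ w a) (hw : ∑ a, w a = 1) {n : α → ℝ} {C : ℝ}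
    (hn0 : ∀ a, 0 ≤ n a) (hn : ∀ a, n a ≤ C) (hS : 0 < ∑ a, w a * n a) (Q : α → ℝ) :
    ((∑ a, w a * Q a) - (∑ a, w a * (Q a * n a)) / ∑ a, w a * n a) ^ 2 * ∑ a, w a * n a
      ≤ C * varOf w (fun a => Q a - ∑ b, w b * Q b) := by
  have hsq (T S : ℝ) (hS0 : S ≠ 0) : (-T / S) ^ 2 * S = T ^ 2 / S := by field_simp
  rw [weighted_mean_sub_div_eq hS.ne', varOf_eq_sum_mul_sq (sum_mul_sub_weighted_mean hw Q),
    hsq _ _ hS.ne', div_le_iff₀ hS]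
  exact sq_sum_mul_mul_le hw0 _ hn0 hn

end WeightedMoments

theorem excess_variance_coma_baseline_bound_general
    {Ai : Type*} [Fintype Ai] {d : ℕ}
    (πi : Ai → ℝ) (h0 : ∀ x, 0 ≤ πi x) (h1 : ∑ x, πi x = 1)
    (g : Ai → Fin d → ℝ)
    (hpos : 0 < ∑ x, πi x * ∑ j, (g x j) ^ 2)
    (D : ℝ) (hD : ∀ x, ∑ j, (g x j) ^ 2 ≤ D ^ 2)
    (Qf : Ai → ℝ)
    (εi : ℝ) (hε : ∀ x, |Qf x - ∑ y, πi y * Qf y| ≤ εi) :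
    ((∑ y, πi y * Qf y)
        - (∑ y, πi y * (Qf y * ∑ j, (g y j) ^ 2)) / (∑ y, πi y * ∑ j, (g y j) ^ 2)) ^ 2
        * (∑ x, πi x * ∑ j, (g x j) ^ 2)
      ≤ D ^ 2 * varOf πi (fun x => Qf x - ∑ y, πi y * Qf y)
    ∧ D ^ 2 * varOf πi (fun x => Qf x - ∑ y, πi y * Qf y) ≤ (εi * D) ^ 2 := by
  refine ⟨sq_mean_sub_baseline_mul_le h0 h1 (fun x => sum_nonneg fun j _ => sq_nonneg (g x j))
    hD hpos Qf, ?_⟩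
  have hvar : varOf πi (fun x => Qf x - ∑ y, πi y * Qf y) ≤ εi ^ 2 := by
    rw [varOf_eq_sum_mul_sq (sum_mul_sub_weighted_mean h1 Qf)]
    exact sum_mul_sq_le_sq_of_abs_le h0 h1 hε
  calc D ^ 2 * varOf πi (fun x => Qf x - ∑ y, πi y * Qf y) ≤ D ^ 2 * εi ^ 2 := by gcongr
    _ = (εi * D) ^ 2 := by ring

/-- The excess local variance of the COMA counterfactual baseline `Q^{-i}` over the
optimal baseline is bounded:
`(Q^{-i} − b*)²·E[‖g‖²] ≤ D²·Var[A^i] ≤ (ε_i D)²`. -/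
theorem excess_variance_coma_baseline_bound
    {Ai : Type*} [Fintype Ai] [Nonempty Ai] {d : ℕ}
    (πi : Ai → ℝ) (h0 : ∀ x, 0 ≤ πi x) (h1 : ∑ x, πi x = 1)
    (g : Ai → Fin d → ℝ)
    (hpos : 0 < ∑ x, πi x * ∑ j, (g x j) ^ 2)
    (D : ℝ) (hD0 : 0 ≤ D) (hD : ∀ x, ∑ j, (g x j) ^ 2 ≤ D ^ 2)
    (Qf : Ai → ℝ)
    (εi : ℝ) (hε : ∀ x, |Qf x - ∑ y, πi y * Qf y| ≤ εi) :
    ((∑ y, πi y * Qf y)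
        - (∑ y, πi y * (Qf y * ∑ j, (g y j) ^ 2)) / (∑ y, πi y * ∑ j, (g y j) ^ 2)) ^ 2
        * (∑ x, πi x * ∑ j, (g x j) ^ 2)
      ≤ D ^ 2 * varOf πi (fun x => Qf x - ∑ y, πi y * Qf y)
    ∧ D ^ 2 * varOf πi (fun x => Qf x - ∑ y, πi y * Qf y) ≤ (εi * D) ^ 2 :=
  excess_variance_coma_baseline_bound_general πi h0 h1 g hpos D hD Qf εi hε
end
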